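/- Asymptotic normalization (orthogonality) identity. Fix l₁₂, l₁₃, l₂₃, l₂₄, l₃₄ ∈ (0,π) such that both triples (l₁₂,l₁₃,l₂₃) and (l₂₃,l₂₄,l₃₄) satisfy the strict spherical triangle conditions: strict triangle inequalities and sum of the three lengths strictly less than 2π. Let U = {t ∈ (0,π) : there exist linearly independent unit vectors u₁,…,u₄ ∈ ℝ⁴ with arccos⟨u_a,u_b⟩ = l_{ab} for the five fixed pairs and arccos⟨u₁,u₄⟩ = t}, and for t ∈ U let G(t) denote the determinant of the 4×4 Gram matrix (cos l_{ab}) with l₁₄ = t. If U is nonempty, then sin(l₂₃) · ∫_U sin(t)/√(G(t)) dt = π. -/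

import Mathlib

/-!
Write `a, b, c, d, e, x` for the cosines of `l₁₂, l₁₃, l₂₃, l₂₄, l₃₄, t`. Expanding the Gram
determinant gives `(1 - c²) G = g₁ g₂ - (1 - c²)² (x - A)²` for an explicit `A`, where
`g₁, g₂ > 0` are the Gram determinants of the two faces through the edge `23`; so
`G = sin² l₂₃ · (B² - (x - A)²)` with `B = √(g₁ g₂) / sin² l₂₃`. A family of unit vectors with
the prescribed angles is linearly independent exactly when its Gram matrix is nonsingular, and
an explicit frame realizes every `x ∈ [A - B, A + B]`; hence `U` is the interval
`A - B < cos t < A + B`. On it `t ↦ arccos ((cos t - A) / B)` is an antiderivative of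
`sin t / √(B² - (cos t - A)²)` running from `0` to `π`, so the integral equals `π / sin l₂₃`.
-/

open Real MeasureTheory
open scoped RealInnerProductSpace

noncomputable abbrev E4 := EuclideanSpace ℝ (Fin 4)

/-- The Gram determinant of the tetrahedron (vertices `1,2,3,4`) with the five fixed
edge lengths `l12, l13, l23, l24, l34` and variable opposite edge length `l14 = t`. -/
noncomputable def gramDet14 (l12 l13 l23 l24 l34 t : ℝ) : ℝ :=
  Matrix.det !![1, Real.cos l12, Real.cos l13, Real.cos t;
                Real.cos l12, 1, Real.cos l23, Real.cos l24;
                Real.cos l13, Real.cos l23, 1, Real.cos l34;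
                Real.cos t, Real.cos l24, Real.cos l34, 1]

open Set

def gramDet3 (a b c : ℝ) : ℝ := 1 - a ^ 2 - b ^ 2 - c ^ 2 + 2 * a * b * c

lemma gramDet3_cos (α β γ : ℝ) :
    gramDet3 (cos α) (cos β) (cos γ) = (cos γ - cos (α + β)) * (cos (α - β) - cos γ) := by
  rw [gramDet3, cos_add, cos_sub]
  linear_combination (-(sin β ^ 2)) * sin_sq_add_cos_sq α - (1 - cos α ^ 2) * sin_sq_add_cos_sq β

lemma gramDet3_cos_pos {α β γ : ℝ} (hγ : γ ∈ Ioo 0 π) (h₁ : α < β + γ) (h₂ : β < α + γ)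
    (h₃ : γ < α + β) (h₄ : α + β + γ < 2 * π) :
    0 < gramDet3 (cos α) (cos β) (cos γ) := by
  have hsum : cos (α + β) < cos γ := by
    rcases le_or_gt (α + β) π with h | h
    · exact cos_lt_cos_of_nonneg_of_le_pi hγ.1.le h h₃
    · rw [← cos_two_pi_sub]
      exact cos_lt_cos_of_nonneg_of_le_pi hγ.1.le (by linarith) (by linarith)
  have hdiff : cos γ < cos (α - β) := by
    rw [← cos_abs (α - β)]
    exact cos_lt_cos_of_nonneg_of_le_pi (abs_nonneg _) hγ.2.le
      (abs_lt.2 ⟨by linarith, by linarith⟩)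
  rw [gramDet3_cos]
  exact mul_pos (sub_pos.2 hsum) (sub_pos.2 hdiff)

lemma cos_sq_lt_one {l : ℝ} (hl : l ∈ Ioo 0 π) : cos l ^ 2 < 1 := by
  rw [cos_sq']
  linarith [pow_pos (sin_pos_of_pos_of_lt_pi hl.1 hl.2) 2]

section TetraGram

variable {a b c d e : ℝ}

def tetraGram (a b c d e x : ℝ) : Matrix (Fin 4) (Fin 4) ℝ :=
  !![1, a, b, x; a, 1, c, d; b, c, 1, e; x, d, e, 1]

-- As a function of the entry `x`, `det (tetraGram a b c d e x)` is a concave quadratic; these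
-- are the centre and the half-width of the interval where it is positive (`det_tetraGram`).
noncomputable def tetraCenter (a b c d e : ℝ) : ℝ :=
  a * d + (b - a * c) * (e - d * c) / (1 - c ^ 2)

noncomputable def tetraRadius (a b c d e : ℝ) : ℝ :=
  √(gramDet3 a b c) * √(gramDet3 d e c) / (1 - c ^ 2)

lemma tetraRadius_nonneg (hc : c ^ 2 < 1) : 0 ≤ tetraRadius a b c d e :=
  div_nonneg (by positivity) (by linarith)

lemma tetraRadius_pos (hc : c ^ 2 < 1) (h₁ : 0 < gramDet3 a b c) (h₂ : 0 < gramDet3 d e c) :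
    0 < tetraRadius a b c d e :=
  div_pos (mul_pos (sqrt_pos.2 h₁) (sqrt_pos.2 h₂)) (by linarith)

lemma one_sub_sq_mul_det_tetraGram (x : ℝ) :
    (1 - c ^ 2) * (tetraGram a b c d e x).det = gramDet3 a b c * gramDet3 d e c
      - ((1 - c ^ 2) * x - (a * d * (1 - c ^ 2) + (b - a * c) * (e - d * c))) ^ 2 := by
  simp [tetraGram, gramDet3, Matrix.det_succ_row_zero, Fin.sum_univ_succ, Fin.succAbove]
  ring

lemma det_tetraGram (x : ℝ) (hc : c ^ 2 < 1) (h₁ : 0 ≤ gramDet3 a b c)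
    (h₂ : 0 ≤ gramDet3 d e c) :
    (tetraGram a b c d e x).det
      = (1 - c ^ 2) * (tetraRadius a b c d e ^ 2 - (x - tetraCenter a b c d e) ^ 2) := by
  have hc' : 1 - c ^ 2 ≠ 0 := by linarith
  refine mul_left_cancel₀ hc' ?_
  rw [one_sub_sq_mul_det_tetraGram, tetraRadius, tetraCenter, div_pow, mul_pow, sq_sqrt h₁,
    sq_sqrt h₂]
  field_simp

lemma det_tetraGram_pos_iff (x : ℝ) (hc : c ^ 2 < 1) (h₁ : 0 ≤ gramDet3 a b c)
    (h₂ : 0 ≤ gramDet3 d e c) :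
    0 < (tetraGram a b c d e x).det ↔ |x - tetraCenter a b c d e| < tetraRadius a b c d e := by
  rw [det_tetraGram x hc h₁ h₂, mul_pos_iff_of_pos_left (by linarith), sub_pos, sq_lt_sq,
    abs_of_nonneg (tetraRadius_nonneg hc)]

lemma inner_toLp_four (x y : Fin 4 → ℝ) :
    ⟪WithLp.toLp 2 x, WithLp.toLp 2 y⟫ = x 0 * y 0 + x 1 * y 1 + x 2 * y 2 + x 3 * y 3 := by
  simp [PiLp.inner_apply, Fin.sum_univ_four, mul_comm]

lemma exists_gram_eq_tetraGram {x : ℝ} (hc : c ^ 2 < 1) (h₁ : 0 ≤ gramDet3 a b c)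
    (h₂ : 0 ≤ gramDet3 d e c) (hx : |x - tetraCenter a b c d e| ≤ tetraRadius a b c d e) :
    ∃ u : Fin 4 → E4, Matrix.gram ℝ u = tetraGram a b c d e x := by
  set s := √(1 - c ^ 2)
  have hs : 0 < s := sqrt_pos.2 (by linarith)
  have hs2 : s ^ 2 = 1 - c ^ 2 := sq_sqrt (by linarith)
  set A := tetraCenter a b c d e with hAdef
  set B := tetraRadius a b c d e with hBdef
  have hB : 0 ≤ B := tetraRadius_nonneg hc
  set p := (x - A) / B
  have hp : p ^ 2 ≤ 1 := by
    rw [sq_le_one_iff_abs_le_one, abs_div, abs_of_nonneg hB]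
    exact div_le_one_of_le₀ hx hB
  have hBp : B * p = x - A := by
    rcases hB.eq_or_lt with hB0 | hBpos
    · rw [← hB0] at hx ⊢
      rw [zero_mul, eq_comm, ← abs_nonpos_iff]
      exact hx
    · exact mul_div_cancel₀ _ hBpos.ne'
  have hA : s ^ 2 * A = a * d * s ^ 2 + (b - a * c) * (e - d * c) := by
    rw [hAdef, tetraCenter, ← hs2]
    field_simp
  have hB' : √(gramDet3 a b c) * √(gramDet3 d e c) = s ^ 2 * B := by
    rw [hBdef, tetraRadius, ← hs2]
    field_simp
  have hg₁ : √(gramDet3 a b c) ^ 2 = 1 - a ^ 2 - b ^ 2 - c ^ 2 + 2 * a * b * c := sq_sqrt h₁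
  have hg₂ : √(gramDet3 d e c) ^ 2 = 1 - d ^ 2 - e ^ 2 - c ^ 2 + 2 * d * e * c := sq_sqrt h₂
  have hq := sq_sqrt (sub_nonneg.2 hp)
  -- Vertices 2 and 3 span the first coordinate plane; the components of vertices 1 and 4
  -- orthogonal to it have lengths `√g₁ / s`, `√g₂ / s` and meet at the angle `arccos p`.
  refine ⟨![WithLp.toLp 2 ![a, (b - a * c) / s, √(gramDet3 a b c) / s, 0],
    WithLp.toLp 2 ![1, 0, 0, 0], WithLp.toLp 2 ![c, s, 0, 0],
    WithLp.toLp 2 ![d, (e - d * c) / s, √(gramDet3 d e c) / s * p,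
      √(gramDet3 d e c) / s * √(1 - p ^ 2)]], ?_⟩
  ext i j
  fin_cases i <;> fin_cases j <;>
    simp only [Matrix.gram_apply, inner_toLp_four, tetraGram, Matrix.of_apply, Matrix.cons_val',
      Matrix.cons_val, Matrix.cons_val_zero, Matrix.cons_val_one, Matrix.cons_val_fin_one,
      Fin.isValue, Fin.reduceFinMk, Fin.zero_eta, Fin.mk_one] <;>
    field_simp <;> grind

lemma abs_real_inner_le_one {E : Type*} [NormedAddCommGroup E] [InnerProductSpace ℝ E] {x y : E}
    (hx : ‖x‖ = 1) (hy : ‖y‖ = 1) : |⟪x, y⟫| ≤ 1 := by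
  simpa [hx, hy] using abs_real_inner_le_norm x y

lemma gram_eq_tetraGram_iff {E : Type*} [NormedAddCommGroup E] [InnerProductSpace ℝ E]
    {x : ℝ} (u : Fin 4 → E) :
    Matrix.gram ℝ u = tetraGram a b c d e x ↔ (∀ i, ‖u i‖ = 1) ∧ ⟪u 0, u 1⟫ = a ∧
      ⟪u 0, u 2⟫ = b ∧ ⟪u 1, u 2⟫ = c ∧ ⟪u 1, u 3⟫ = d ∧ ⟪u 2, u 3⟫ = e ∧ ⟪u 0, u 3⟫ = x := by
  constructor
  · intro h
    have entry : ∀ i j, ⟪u i, u j⟫ = tetraGram a b c d e x i j := fun i j => by rw [← h]; rfl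
    refine ⟨fun i => ?_, entry 0 1, entry 0 2, entry 1 2, entry 1 3, entry 2 3, entry 0 3⟩
    have hii : ‖u i‖ ^ 2 = 1 := by
      rw [← real_inner_self_eq_norm_sq, entry]
      fin_cases i <;> rfl
    exact (pow_eq_one_iff_of_nonneg (norm_nonneg _) two_ne_zero).1 hii
  · rintro ⟨hn, h01, h02, h12, h13, h23, h03⟩
    ext i j
    fin_cases i <;> fin_cases j <;>
      simp only [Matrix.gram_apply, real_inner_self_eq_norm_sq, hn, one_pow, tetraGram,
        Matrix.of_apply, Matrix.cons_val', Matrix.cons_val, Matrix.cons_val_zero,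
        Matrix.cons_val_one, Matrix.cons_val_fin_one, Fin.isValue, Fin.reduceFinMk, Fin.zero_eta,
        Fin.mk_one] <;>
      first | assumption | (rw [real_inner_comm]; assumption)

lemma exists_linearIndependent_gram_eq_tetraGram_iff (x : ℝ) (hc : c ^ 2 < 1)
    (h₁ : 0 ≤ gramDet3 a b c) (h₂ : 0 ≤ gramDet3 d e c) :
    (∃ u : Fin 4 → E4, LinearIndependent ℝ u ∧ Matrix.gram ℝ u = tetraGram a b c d e x) ↔
      0 < (tetraGram a b c d e x).det := by
  constructor
  · rintro ⟨u, hu, hgram⟩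
    exact hgram ▸ (Matrix.posDef_gram_of_linearIndependent hu).det_pos
  · intro hdet
    obtain ⟨u, hu⟩ :=
      exists_gram_eq_tetraGram hc h₁ h₂ ((det_tetraGram_pos_iff x hc h₁ h₂).1 hdet).le
    exact ⟨u, Matrix.det_gram_ne_zero_iff_linearIndependent.1 (hu ▸ hdet.ne'), hu⟩

lemma abs_le_one_of_abs_sub_tetraCenter_le {x : ℝ} (hc : c ^ 2 < 1)
    (h₁ : 0 ≤ gramDet3 a b c) (h₂ : 0 ≤ gramDet3 d e c)
    (hx : |x - tetraCenter a b c d e| ≤ tetraRadius a b c d e) : |x| ≤ 1 := by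
  obtain ⟨u, hu⟩ := exists_gram_eq_tetraGram hc h₁ h₂ hx
  obtain ⟨hn, -, -, -, -, -, rfl⟩ := (gram_eq_tetraGram_iff u).1 hu
  exact abs_real_inner_le_one (hn 0) (hn 3)

lemma tetraCenter_add_tetraRadius_le_one (hc : c ^ 2 < 1) (h₁ : 0 ≤ gramDet3 a b c)
    (h₂ : 0 ≤ gramDet3 d e c) : tetraCenter a b c d e + tetraRadius a b c d e ≤ 1 :=
  (abs_le.1 (abs_le_one_of_abs_sub_tetraCenter_le hc h₁ h₂
    (by rw [add_sub_cancel_left, abs_of_nonneg (tetraRadius_nonneg hc)]))).2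

lemma neg_one_le_tetraCenter_sub_tetraRadius (hc : c ^ 2 < 1) (h₁ : 0 ≤ gramDet3 a b c)
    (h₂ : 0 ≤ gramDet3 d e c) : -1 ≤ tetraCenter a b c d e - tetraRadius a b c d e :=
  (abs_le.1 (abs_le_one_of_abs_sub_tetraCenter_le hc h₁ h₂
    (by rw [sub_sub_cancel_left, abs_neg, abs_of_nonneg (tetraRadius_nonneg hc)]))).1

end TetraGram

lemma arccos_inner_eq_iff {E : Type*} [NormedAddCommGroup E] [InnerProductSpace ℝ E] {x y : E}
    {l : ℝ} (hx : ‖x‖ = 1) (hy : ‖y‖ = 1) (hl : l ∈ Icc 0 π) :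
    arccos ⟪x, y⟫ = l ↔ ⟪x, y⟫ = cos l := by
  obtain ⟨h₁, h₂⟩ := abs_le.1 (abs_real_inner_le_one hx hy)
  constructor
  · rintro rfl
    exact (cos_arccos h₁ h₂).symm
  · exact arccos_eq_of_eq_cos hl.1 hl.2

lemma cos_mem_Ioo_iff {t lo hi : ℝ} (ht : t ∈ Icc 0 π) (hlo : -1 ≤ lo) (hle : lo ≤ hi)
    (hhi : hi ≤ 1) : cos t ∈ Ioo lo hi ↔ t ∈ Ioo (arccos hi) (arccos lo) := by
  have hcos : cos t ∈ Icc (-1) 1 := ⟨neg_one_le_cos t, cos_le_one t⟩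
  conv_rhs => rw [← arccos_cos ht.1 ht.2]
  rw [mem_Ioo, mem_Ioo, strictAntiOn_arccos.lt_iff_gt ⟨hlo.trans hle, hhi⟩ hcos,
    strictAntiOn_arccos.lt_iff_gt hcos ⟨hlo, hle.trans hhi⟩, and_comm]

lemma setOf_exists_tetrahedron_eq_Ioo {l12 l13 l23 l24 l34 : ℝ} (h12 : l12 ∈ Icc 0 π)
    (h13 : l13 ∈ Icc 0 π) (h23 : l23 ∈ Ioo 0 π) (h24 : l24 ∈ Icc 0 π) (h34 : l34 ∈ Icc 0 π)
    (h₁ : 0 ≤ gramDet3 (cos l12) (cos l13) (cos l23))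
    (h₂ : 0 ≤ gramDet3 (cos l24) (cos l34) (cos l23)) :
    {t ∈ Ioo 0 π | ∃ u : Fin 4 → E4,
      LinearIndependent ℝ u ∧ (∀ i, ‖u i‖ = 1) ∧
      arccos ⟪u 0, u 1⟫ = l12 ∧ arccos ⟪u 0, u 2⟫ = l13 ∧
      arccos ⟪u 1, u 2⟫ = l23 ∧ arccos ⟪u 1, u 3⟫ = l24 ∧
      arccos ⟪u 2, u 3⟫ = l34 ∧ arccos ⟪u 0, u 3⟫ = t} =
    Ioo (arccos (tetraCenter (cos l12) (cos l13) (cos l23) (cos l24) (cos l34) +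
        tetraRadius (cos l12) (cos l13) (cos l23) (cos l24) (cos l34)))
      (arccos (tetraCenter (cos l12) (cos l13) (cos l23) (cos l24) (cos l34) -
        tetraRadius (cos l12) (cos l13) (cos l23) (cos l24) (cos l34))) := by
  set A := tetraCenter (cos l12) (cos l13) (cos l23) (cos l24) (cos l34)
  set B := tetraRadius (cos l12) (cos l13) (cos l23) (cos l24) (cos l34)
  have hc := cos_sq_lt_one h23
  have hB : 0 ≤ B := tetraRadius_nonneg hc
  have hlo := neg_one_le_tetraCenter_sub_tetraRadius hc h₁ h₂
  have hhi := tetraCenter_add_tetraRadius_le_one hc h₁ h₂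
  have key : ∀ t ∈ Icc 0 π, (∃ u : Fin 4 → E4,
      LinearIndependent ℝ u ∧ (∀ i, ‖u i‖ = 1) ∧
      arccos ⟪u 0, u 1⟫ = l12 ∧ arccos ⟪u 0, u 2⟫ = l13 ∧
      arccos ⟪u 1, u 2⟫ = l23 ∧ arccos ⟪u 1, u 3⟫ = l24 ∧
      arccos ⟪u 2, u 3⟫ = l34 ∧ arccos ⟪u 0, u 3⟫ = t) ↔
        t ∈ Ioo (arccos (A + B)) (arccos (A - B)) := by
    intro t ht
    rw [← cos_mem_Ioo_iff ht hlo (by linarith) hhi, ← Real.ball_eq_Ioo, Metric.mem_ball,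
      Real.dist_eq, ← det_tetraGram_pos_iff _ hc h₁ h₂,
      ← exists_linearIndependent_gram_eq_tetraGram_iff _ hc h₁ h₂]
    refine exists_congr fun u => and_congr_right fun _ => ?_
    rw [gram_eq_tetraGram_iff]
    refine and_congr_right fun hn => ?_
    rw [arccos_inner_eq_iff (hn 0) (hn 1) h12, arccos_inner_eq_iff (hn 0) (hn 2) h13,
      arccos_inner_eq_iff (hn 1) (hn 2) (Ioo_subset_Icc_self h23),
      arccos_inner_eq_iff (hn 1) (hn 3) h24, arccos_inner_eq_iff (hn 2) (hn 3) h34,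
      arccos_inner_eq_iff (hn 0) (hn 3) ht]
  ext t
  constructor
  · rintro ⟨ht, hex⟩
    exact (key t (Ioo_subset_Icc_self ht)).1 hex
  · intro ht
    have ht' : t ∈ Ioo 0 π :=
      ⟨(arccos_nonneg _).trans_lt ht.1, ht.2.trans_le (arccos_le_pi _)⟩
    exact ⟨ht', (key t (Ioo_subset_Icc_self ht')).2 ht⟩

lemma integral_sin_div_sqrt_sq_sub_sq {A B : ℝ} (hB : 0 < B) (h₁ : -1 ≤ A - B)
    (h₂ : A + B ≤ 1) :
    ∫ t in Ioo (arccos (A + B)) (arccos (A - B)), sin t / √(B ^ 2 - (cos t - A) ^ 2) = π := by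
  set t₀ := arccos (A + B)
  set t₁ := arccos (A - B)
  have hlt : t₀ < t₁ := arccos_lt_arccos h₁ (by linarith) h₂
  have hcos : ∀ t ∈ Ioo t₀ t₁, (cos t - A) / B ∈ Ioo (-1) 1 := by
    intro t ht
    have ht' : t ∈ Icc 0 π := ⟨(arccos_nonneg _).trans ht.1.le, ht.2.le.trans (arccos_le_pi _)⟩
    obtain ⟨hlo, hhi⟩ := (cos_mem_Ioo_iff ht' h₁ (by linarith) h₂).2 ht
    rw [mem_Ioo, lt_div_iff₀ hB, div_lt_one hB]
    constructor <;> linarith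
  have hderiv : ∀ t ∈ Ioo t₀ t₁, HasDerivAt (fun t => arccos ((cos t - A) / B))
      (sin t / √(B ^ 2 - (cos t - A) ^ 2)) t := by
    intro t ht
    obtain ⟨hlo, hhi⟩ := hcos t ht
    refine ((hasDerivAt_arccos hlo.ne' hhi.ne).comp t
      (((hasDerivAt_cos t).sub_const A).div_const B)).congr_deriv ?_
    have hsqrt : √(B ^ 2 - (cos t - A) ^ 2) = B * √(1 - ((cos t - A) / B) ^ 2) := by
      rw [← sqrt_sq hB.le, ← sqrt_mul (sq_nonneg B), sqrt_sq hB.le]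
      field_simp
    rw [hsqrt]
    field_simp
  have hcont : Continuous fun t => arccos ((cos t - A) / B) := by fun_prop
  have hnonneg : ∀ t ∈ Ioo t₀ t₁, 0 ≤ sin t / √(B ^ 2 - (cos t - A) ^ 2) := fun t ht =>
    div_nonneg (sin_nonneg_of_nonneg_of_le_pi ((arccos_nonneg _).trans ht.1.le)
      (ht.2.le.trans (arccos_le_pi _))) (sqrt_nonneg _)
  have hint := intervalIntegral.integrableOn_deriv_of_nonneg hcont.continuousOn hderiv hnonneg
  rw [← integral_Ioc_eq_integral_Ioo, ← intervalIntegral.integral_of_le hlt.le,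
    intervalIntegral.integral_eq_sub_of_hasDerivAt_of_le hlt.le hcont.continuousOn hderiv
      ((intervalIntegrable_iff_integrableOn_Ioc_of_le hlt.le).2 hint),
    cos_arccos h₁ (by linarith), cos_arccos (by linarith) h₂, sub_sub_cancel_left,
    add_sub_cancel_left, neg_div, div_self hB.ne', arccos_neg_one, arccos_one, sub_zero]

theorem asymptotic_normalization_identity (l12 l13 l23 l24 l34 : ℝ)
    (h12 : l12 ∈ Set.Ioo 0 π) (h13 : l13 ∈ Set.Ioo 0 π) (h23 : l23 ∈ Set.Ioo 0 π)
    (h24 : l24 ∈ Set.Ioo 0 π) (h34 : l34 ∈ Set.Ioo 0 π)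
    (htri1 : l12 < l13 + l23 ∧ l13 < l12 + l23 ∧ l23 < l12 + l13 ∧
      l12 + l13 + l23 < 2 * π)
    (htri2 : l23 < l24 + l34 ∧ l24 < l23 + l34 ∧ l34 < l23 + l24 ∧
      l23 + l24 + l34 < 2 * π)
    (U : Set ℝ)
    (hU : U = {t ∈ Set.Ioo 0 π | ∃ u : Fin 4 → E4,
      LinearIndependent ℝ u ∧ (∀ i, ‖u i‖ = 1) ∧
      Real.arccos ⟪u 0, u 1⟫ = l12 ∧ Real.arccos ⟪u 0, u 2⟫ = l13 ∧
      Real.arccos ⟪u 1, u 2⟫ = l23 ∧ Real.arccos ⟪u 1, u 3⟫ = l24 ∧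
      Real.arccos ⟪u 2, u 3⟫ = l34 ∧ Real.arccos ⟪u 0, u 3⟫ = t}) :
    Real.sin l23 * ∫ t in U, Real.sin t / Real.sqrt (gramDet14 l12 l13 l23 l24 l34 t)
      = π := by
  have hc := cos_sq_lt_one h23
  have hs := sin_pos_of_pos_of_lt_pi h23.1 h23.2
  have h₁ := gramDet3_cos_pos h23 htri1.1 htri1.2.1 htri1.2.2.1 htri1.2.2.2
  have h₂ : 0 < gramDet3 (cos l24) (cos l34) (cos l23) := by
    obtain ⟨_, _, _, _⟩ := htri2
    exact gramDet3_cos_pos h23 (by linarith) (by linarith) (by linarith) (by linarith)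
  set A := tetraCenter (cos l12) (cos l13) (cos l23) (cos l24) (cos l34)
  set B := tetraRadius (cos l12) (cos l13) (cos l23) (cos l24) (cos l34)
  have hG : ∀ t, sin t / √(gramDet14 l12 l13 l23 l24 l34 t)
      = (sin l23)⁻¹ * (sin t / √(B ^ 2 - (cos t - A) ^ 2)) := fun t => by
    rw [gramDet14, ← tetraGram, det_tetraGram _ hc h₁.le h₂.le, ← sin_sq,
      sqrt_mul (sq_nonneg _), sqrt_sq hs.le]
    ring
  rw [hU, setOf_exists_tetrahedron_eq_Ioo (Ioo_subset_Icc_self h12) (Ioo_subset_Icc_self h13) h23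
    (Ioo_subset_Icc_self h24) (Ioo_subset_Icc_self h34) h₁.le h₂.le]
  simp_rw [hG]
  rw [integral_const_mul, integral_sin_div_sqrt_sq_sub_sq (tetraRadius_pos hc h₁ h₂)
    (neg_one_le_tetraCenter_sub_tetraRadius hc h₁.le h₂.le)
    (tetraCenter_add_tetraRadius_le_one hc h₁.le h₂.le), mul_inv_cancel_left₀ hs.ne']
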